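/- arXiv:2407.21091 — 2 statements merged into one kernel-verified Lean document; each statement's English description precedes it below -/
import Mathlib

section
/- Suppose f_k(α̂ + t d) − f_k(α̂) ≤ −m₁ ‖d‖² t for a step t with t‖d‖ ≥ δ/n, and suppose |f_k(β) − f(β)| ≤ κ δ² for β ∈ {α̂, α̂ + t d}. If δ ≤ ‖d‖ / (16 n κ) and m₁ ≥ 1/4, then f(α̂ + t d) − f(α̂) ≤ −C₁ ‖d‖ δ with C₁ = 1/(8n). -/
/-! The Armijo condition makes `f_k` drop by at least `‖d‖ δ / (4 n)`, while the two
approximation errors `κ δ²` together cost at most `‖d‖ δ / (8 n)`, half of that drop. -/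

theorem sub_le_sub_add_of_abs_sub_le {α : Type*} {f g : α → ℝ} {x y : α} {ε : ℝ}
    (hx : |g x - f x| ≤ ε) (hy : |g y - f y| ≤ ε) :
    f y - f x ≤ g y - g x + 2 * ε := by
  linarith [(abs_le.mp hx).2, (abs_le.mp hy).1]

theorem le_armijo_decrease {a t δ m₁ n : ℝ} (hn : 0 < n) (hδ : 0 ≤ δ) (ha : 0 ≤ a)
    (hstep : δ / n ≤ t * a) (hm₁ : 1 / 4 ≤ m₁) :
    a * δ / (4 * n) ≤ m₁ * a ^ 2 * t := by
  have hta : 0 ≤ t * a := (div_nonneg hδ hn.le).trans hstep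
  calc a * δ / (4 * n) = a * (1 / 4 * (δ / n)) := by field_simp
    _ ≤ a * (m₁ * (t * a)) := by gcongr
    _ = m₁ * a ^ 2 * t := by ring

theorem two_mul_mul_sq_le_of_le_div {a δ κ n : ℝ} (hn : 0 < n) (hκ : 0 < κ) (hδ : 0 ≤ δ)
    (hδa : δ ≤ a / (16 * n * κ)) :
    2 * (κ * δ ^ 2) ≤ a * δ / (8 * n) := by
  have h : 16 * n * κ * δ ≤ a := by
    rwa [le_div_iff₀ (by positivity), mul_comm] at hδa
  rw [le_div_iff₀ (by positivity)]
  nlinarith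

/-- sufficient decrease of the true function (Lemma 3.5). -/
theorem stmt_2 {m : ℕ} (f fk : EuclideanSpace ℝ (Fin m) → ℝ)
    (αhat d : EuclideanSpace ℝ (Fin m)) (t δ κ m₁ : ℝ) (n : ℕ) (hn : 1 ≤ n)
    (hδ : 0 < δ) (hκ : 0 < κ)
    (hdec : fk (αhat + t • d) - fk αhat ≤ -m₁ * ‖d‖ ^ 2 * t)
    (hstep : t * ‖d‖ ≥ δ / n)
    (happrox : ∀ β ∈ ({αhat, αhat + t • d} : Set (EuclideanSpace ℝ (Fin m))),
      |fk β - f β| ≤ κ * δ ^ 2)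
    (hδd : δ ≤ ‖d‖ / (16 * n * κ)) (hm₁ : m₁ ≥ 1 / 4) :
    f (αhat + t • d) - f αhat ≤ -(1 / (8 * n)) * ‖d‖ * δ := by
  have hn' : (0 : ℝ) < n := Nat.cast_pos.mpr hn
  have hdecrease := le_armijo_decrease hn' hδ.le (norm_nonneg d) hstep hm₁
  have herror := two_mul_mul_sq_le_of_le_div hn' hκ hδ.le hδd
  have hsplit : -(1 / (8 * n)) * ‖d‖ * δ = -(‖d‖ * δ / (4 * n)) + ‖d‖ * δ / (8 * n) := by
    field_simp; ring
  calc f (αhat + t • d) - f αhat ≤ fk (αhat + t • d) - fk αhat + 2 * (κ * δ ^ 2) :=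
        sub_le_sub_add_of_abs_sub_le (happrox _ (by simp)) (happrox _ (by simp))
    _ ≤ -(1 / (8 * n)) * ‖d‖ * δ := by linarith
end

section
/- Let f_k satisfy the sufficient decrease f_k(α̂ + t d) − f_k(α̂) ≤ −2 C₁ ‖d‖ δ, let |f_k(β) − f(β)| ≤ κ δ² for β ∈ {α̂, α̂ + t d}, and let the estimates f̂₊, f̂ satisfy |f̂ − f(α̂)| ≤ ε_F δ² and |f̂₊ − f(α̂ + t d)| ≤ ε_F δ² with ε_F ≤ κ. If δ ≤ (1 − η₁) C₁ ‖d‖ / (2κ) for η₁ ∈ (0,1), then the ratio ρ = (f̂₊ − f̂)/(f_k(α̂ + t d) − f_k(α̂)) satisfies ρ ≥ η₁. -/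
/-!
Passing from the estimates `f̂₊ - f̂` to the model difference through `f` costs at most `2 (κ + ε_F) δ² ≤ 4 κ δ²`
in the numerator, while the sufficient decrease makes the denominator at most `-2 C₁ ‖d‖ δ`.
The bound on `δ` turns `4 κ δ²` into at most `(1 - η₁)` times the decrease, so the
numerator is at most `η₁` times the (negative) denominator.
-/

lemma sub_le_sub_add_of_abs_sub_le_s3 {yPlus y vPlus v ePlus e r s : ℝ}
    (hyPlus : |yPlus - vPlus| ≤ r) (hy : |y - v| ≤ r)
    (hePlus : |ePlus - vPlus| ≤ s) (he : |e - v| ≤ s) :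
    ePlus - e ≤ yPlus - y + 2 * (r + s) := by
  linarith [abs_le.mp hyPlus, abs_le.mp hy, abs_le.mp hePlus, abs_le.mp he]

lemma le_div_of_sufficient_decrease {N D c δ κ η : ℝ} (hδ : 0 < δ) (hκ : 0 < κ) (hη : η < 1)
    (hdec : D ≤ -2 * c * δ) (hδc : 2 * κ * δ ≤ (1 - η) * c)
    (hN : N ≤ D + 4 * κ * δ ^ 2) :
    η ≤ N / D := by
  have hc : 0 < c :=
    pos_of_mul_pos_right ((by positivity : 0 < 2 * κ * δ).trans_le hδc) (by linarith)
  have hD : D < 0 := by nlinarith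
  have herr : 4 * κ * δ ^ 2 ≤ (1 - η) * -D :=
    calc 4 * κ * δ ^ 2 = 2 * δ * (2 * κ * δ) := by ring
      _ ≤ 2 * δ * ((1 - η) * c) := by gcongr
      _ = (1 - η) * (2 * c * δ) := by ring
      _ ≤ (1 - η) * -D := by gcongr; linarith
  rw [le_div_iff_of_neg hD]
  linarith

theorem stmt_3_general {m : ℕ} (f fk : EuclideanSpace ℝ (Fin m) → ℝ)
    (αhat d : EuclideanSpace ℝ (Fin m)) (t δ κ C₁ εF η₁ fhat fhatPlus : ℝ)
    (hδ : 0 < δ) (hκ : 0 < κ) (hη₁ : η₁ ∈ Set.Ioo (0 : ℝ) 1)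
    (hdec : fk (αhat + t • d) - fk αhat ≤ -2 * C₁ * ‖d‖ * δ)
    (happrox : ∀ β ∈ ({αhat, αhat + t • d} : Set (EuclideanSpace ℝ (Fin m))),
      |fk β - f β| ≤ κ * δ ^ 2)
    (hacc1 : |fhat - f αhat| ≤ εF * δ ^ 2)
    (hacc2 : |fhatPlus - f (αhat + t • d)| ≤ εF * δ ^ 2)
    (hεF : εF ≤ κ)
    (hδd : δ ≤ (1 - η₁) * C₁ * ‖d‖ / (2 * κ)) :
    (fhatPlus - fhat) / (fk (αhat + t • d) - fk αhat) ≥ η₁ := by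
  have hstep : 2 * κ * δ ≤ (1 - η₁) * (C₁ * ‖d‖) := by
    rw [le_div_iff₀ (by positivity)] at hδd
    linarith
  have hnum := sub_le_sub_add_of_abs_sub_le_s3 (happrox (αhat + t • d) (by simp))
    (happrox αhat (by simp)) hacc2 hacc1
  refine le_div_of_sufficient_decrease hδ hκ hη₁.2 (by linarith) hstep ?_
  linarith [mul_le_mul_of_nonneg_right hεF (sq_nonneg δ)]

/-- the acceptance ratio on accurate iterations is at least η₁ (Lemma 3.6). -/
theorem stmt_3 {m : ℕ} (f fk : EuclideanSpace ℝ (Fin m) → ℝ)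
    (αhat d : EuclideanSpace ℝ (Fin m)) (t δ κ C₁ εF η₁ fhat fhatPlus : ℝ)
    (hδ : 0 < δ) (hκ : 0 < κ) (hC₁ : 0 < C₁) (hη₁ : η₁ ∈ Set.Ioo (0 : ℝ) 1)
    (hdec : fk (αhat + t • d) - fk αhat ≤ -2 * C₁ * ‖d‖ * δ)
    (happrox : ∀ β ∈ ({αhat, αhat + t • d} : Set (EuclideanSpace ℝ (Fin m))),
      |fk β - f β| ≤ κ * δ ^ 2)
    (hacc1 : |fhat - f αhat| ≤ εF * δ ^ 2)
    (hacc2 : |fhatPlus - f (αhat + t • d)| ≤ εF * δ ^ 2)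
    (hεF : εF ≤ κ)
    (hδd : δ ≤ (1 - η₁) * C₁ * ‖d‖ / (2 * κ)) :
    (fhatPlus - fhat) / (fk (αhat + t • d) - fk αhat) ≥ η₁ :=
  stmt_3_general f fk αhat d t δ κ C₁ εF η₁ fhat fhatPlus hδ hκ hη₁ hdec happrox hacc1 hacc2 hεF hδd
end
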